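/- arXiv:1207.0610 — 2 statements merged into one kernel-verified Lean document; each statement's English description precedes it below -/
import Mathlib

section
/- Let A be a commutative ring, I a set, R = A[(X_i)_{i∈I}] the polynomial ring, and 𝔞, 𝔟 ⊆ R monomial ideals. Then √𝔞 = √𝔟 if and only if ⌊𝔞⌋ = ⌊𝔟⌋. (Lemma 2.05 b).) -/
open MvPolynomial

/-- `suppInd μ` is the characteristic function of the support of `μ`,
so that `X^(suppInd μ) = ∏_{i : μ i > 0} X i`. -/
noncomputable def suppInd {I : Type v} (μ : I →₀ ℕ) : I →₀ ℕ :=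
  μ.mapRange (fun n => if n = 0 then 0 else 1) (by simp)

/-- A monomial ideal of `A[(X_i)_{i ∈ I}]` is an ideal generated by a set of monomials. -/
def IsMonomialIdeal {A : Type u} [CommRing A] {I : Type v}
    (𝔞 : Ideal (MvPolynomial I A)) : Prop :=
  ∃ E : Set (I →₀ ℕ), 𝔞 = Ideal.span ((fun μ => monomial μ (1 : A)) '' E)

/-- `⌊𝔞⌋` is the ideal generated by the monomials `X^(suppInd μ)` for all monomials
`X^μ ∈ 𝔞`. -/
noncomputable def mvFloor {A : Type u} [CommRing A] {I : Type v}
    (𝔞 : Ideal (MvPolynomial I A)) : Ideal (MvPolynomial I A) :=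
  Ideal.span {f | ∃ μ : I →₀ ℕ, monomial μ (1 : A) ∈ 𝔞 ∧ f = monomial (suppInd μ) (1 : A)}

/-!
The monomials `X^μ` and `X^(sq μ)` generate the same radical: `X^μ` is a multiple of `X^(sq μ)`,
and `(X^(sq μ))^|μ|` is a multiple of `X^μ`. Hence `𝔞 ⊆ ⌊𝔞⌋ ⊆ √𝔞` for a monomial ideal `𝔞`,
so `√𝔞 = √⌊𝔞⌋`. Conversely `⌊𝔞⌋` only depends on `√𝔞`: if `X^(sq μ) ∈ √𝔞`, some power
`X^(n • sq μ)` with `n > 0` lies in `𝔞`, and `sq (n • sq μ) = sq μ`.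
-/

section suppInd

variable {I : Type*}

lemma suppInd_apply (μ : I →₀ ℕ) (i : I) : suppInd μ i = if μ i = 0 then 0 else 1 := by
  simp [suppInd]

lemma suppInd_le (μ : I →₀ ℕ) : suppInd μ ≤ μ := by
  intro i
  rw [suppInd_apply]
  split <;> omega

lemma suppInd_smul {n : ℕ} (hn : n ≠ 0) (μ : I →₀ ℕ) : suppInd (n • μ) = suppInd μ := by
  ext i
  simp [suppInd_apply, hn]

lemma suppInd_suppInd (μ : I →₀ ℕ) : suppInd (suppInd μ) = suppInd μ := by
  ext i
  rw [suppInd_apply, suppInd_apply]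
  split <;> simp

lemma le_degree_smul_suppInd (μ : I →₀ ℕ) : μ ≤ μ.degree • suppInd μ := by
  intro i
  rw [Finsupp.smul_apply, suppInd_apply, smul_eq_mul]
  split
  · omega
  · simpa using Finsupp.le_degree i μ

end suppInd

section CommSemiring

variable {A : Type*} [CommSemiring A] {I : Type*} {𝔞 : Ideal (MvPolynomial I A)} {μ ν : I →₀ ℕ}

lemma monomial_one_mem_of_le (hle : μ ≤ ν) (h : monomial μ (1 : A) ∈ 𝔞) :
    monomial ν (1 : A) ∈ 𝔞 :=
  𝔞.mem_of_dvd (monomial_dvd_monomial.2 ⟨Or.inr hle, dvd_rfl⟩) h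

lemma monomial_suppInd_mem_radical (h : monomial μ (1 : A) ∈ 𝔞) :
    monomial (suppInd μ) (1 : A) ∈ 𝔞.radical := by
  refine ⟨μ.degree, ?_⟩
  rw [monomial_pow, one_pow]
  exact monomial_one_mem_of_le (le_degree_smul_suppInd μ) h

lemma exists_monomial_mem_suppInd_eq_of_mem_radical
    (h : monomial (suppInd μ) (1 : A) ∈ 𝔞.radical) :
    ∃ ν, monomial ν (1 : A) ∈ 𝔞 ∧ suppInd ν = suppInd μ := by
  obtain ⟨n, hn⟩ := h
  refine ⟨(n + 1) • suppInd μ, ?_, by rw [suppInd_smul n.succ_ne_zero, suppInd_suppInd]⟩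
  simpa only [monomial_pow, one_pow] using 𝔞.pow_mem_of_pow_mem hn n.le_succ

end CommSemiring

section CommRing

variable {A : Type*} [CommRing A] {I : Type*} {𝔞 𝔟 : Ideal (MvPolynomial I A)}

lemma mvFloor_le_radical (𝔞 : Ideal (MvPolynomial I A)) : mvFloor 𝔞 ≤ 𝔞.radical := by
  rw [mvFloor, Ideal.span_le]
  rintro f ⟨μ, hμ, rfl⟩
  exact monomial_suppInd_mem_radical hμ

lemma mvFloor_le_mvFloor_of_radical_le (h : 𝔞.radical ≤ 𝔟.radical) : mvFloor 𝔞 ≤ mvFloor 𝔟 := by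
  rw [mvFloor, Ideal.span_le]
  rintro f ⟨μ, hμ, rfl⟩
  obtain ⟨ν, hν, hνμ⟩ :=
    exists_monomial_mem_suppInd_eq_of_mem_radical (h (monomial_suppInd_mem_radical hμ))
  exact Ideal.subset_span ⟨ν, hν, by rw [hνμ]⟩

lemma IsMonomialIdeal.le_mvFloor (h𝔞 : IsMonomialIdeal 𝔞) : 𝔞 ≤ mvFloor 𝔞 := by
  obtain ⟨E, rfl⟩ := h𝔞
  rw [Ideal.span_le]
  rintro f ⟨μ, hμ, rfl⟩
  have hfloor : monomial (suppInd μ) (1 : A) ∈ mvFloor (Ideal.span ((monomial · 1) '' E)) :=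
    Ideal.subset_span ⟨μ, Ideal.subset_span ⟨μ, hμ, rfl⟩, rfl⟩
  exact monomial_one_mem_of_le (suppInd_le μ) hfloor

lemma IsMonomialIdeal.radical_mvFloor (h𝔞 : IsMonomialIdeal 𝔞) :
    (mvFloor 𝔞).radical = 𝔞.radical :=
  le_antisymm (Ideal.radical_le_radical_iff.2 (mvFloor_le_radical 𝔞))
    (Ideal.radical_mono h𝔞.le_mvFloor)

end CommRing

/-- (Lemma 2.05 b)): for monomial ideals `𝔞, 𝔟` of `A[(X_i)_{i ∈ I}]`,
`√𝔞 = √𝔟` if and only if `⌊𝔞⌋ = ⌊𝔟⌋`. -/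
theorem radical_eq_radical_iff_floor_eq_floor {A : Type u} [CommRing A] {I : Type v}
    (𝔞 𝔟 : Ideal (MvPolynomial I A)) (h𝔞 : IsMonomialIdeal 𝔞) (h𝔟 : IsMonomialIdeal 𝔟) :
    𝔞.radical = 𝔟.radical ↔ mvFloor 𝔞 = mvFloor 𝔟 := by
  refine ⟨fun h => le_antisymm (mvFloor_le_mvFloor_of_radical_le h.le)
    (mvFloor_le_mvFloor_of_radical_le h.ge), fun h => ?_⟩
  rw [← h𝔞.radical_mvFloor, ← h𝔟.radical_mvFloor, h]
end

section
/- Let A be a commutative ring, I a set, and R = A[(X_i)_{i∈I}] the polynomial ring. If there exists a proper monomial ideal 𝔞 ⊊ R with Γ_{⌊𝔞⌋} = Γ_{√𝔞} (i.e., Γ_{⌊𝔞⌋}(M) = Γ_{√𝔞}(M) for every R-module M), then the nilradical nil(A) of A is nilpotent. (Implication (iii) ⇒ (i) of the unnumbered Proposition of Section 2.) -/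
open MvPolynomial

/-
Testing `Γ_⌊𝔞⌋ = Γ_√𝔞` on the class of `1` in `R/⌊𝔞⌋` gives `(√𝔞)^n ⊆ ⌊𝔞⌋` for
some `n`. Since `𝔞` is proper, `⌊𝔞⌋` is generated by nonconstant monomials, so it has no nonzero
constants. But the image of `nil(A)` lies in `√𝔞`, hence `nil(A)^n ⊆ ⌊𝔞⌋ ∩ A = 0`.
-/

theorem Ideal.torsionOf_quotient_one {R : Type*} [CommRing R] (𝔟 : Ideal R) :
    torsionOf R (R ⧸ 𝔟) 1 = 𝔟 := by
  ext r
  rw [mem_torsionOf_iff, Algebra.smul_def, mul_one, Ideal.Quotient.algebraMap_eq,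
    Ideal.Quotient.eq_zero_iff_mem]

theorem Ideal.exists_pow_le_of_torsion_imp {R : Type u} [CommRing R] {𝔟 𝔠 : Ideal R}
    (h : ∀ (M : Type u) [AddCommGroup M] [Module R M] (x : M),
      (∃ n : ℕ, 𝔟 ^ n ≤ torsionOf R M x) → ∃ n : ℕ, 𝔠 ^ n ≤ torsionOf R M x) :
    ∃ n : ℕ, 𝔠 ^ n ≤ 𝔟 := by
  simpa only [torsionOf_quotient_one] using h (R ⧸ 𝔟) 1 ⟨1, by rw [torsionOf_quotient_one, pow_one]⟩

theorem Ideal.map_nilradical_le_radical {R S : Type*} [CommRing R] [CommRing S] (f : R →+* S)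
    (J : Ideal S) : (nilradical R).map f ≤ J.radical := by
  rw [map_le_iff_le_comap]
  rintro a ⟨k, hk⟩
  exact ⟨k, by rw [← map_pow, hk, map_zero]; exact J.zero_mem⟩

theorem suppInd_eq_zero_iff {I : Type*} {μ : I →₀ ℕ} : suppInd μ = 0 ↔ μ = 0 := by
  simp [Finsupp.ext_iff, suppInd]

theorem mvFloor_le_ker_constantCoeff {A : Type*} [CommRing A] {I : Type*}
    {𝔞 : Ideal (MvPolynomial I A)} (hproper : 𝔞 ≠ ⊤) :
    mvFloor 𝔞 ≤ RingHom.ker (constantCoeff (R := A) (σ := I)) := by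
  classical
  rw [mvFloor, Ideal.span_le]
  rintro f ⟨μ, hμ, rfl⟩
  have hμ0 : μ ≠ 0 := by
    rintro rfl
    exact hproper ((Ideal.eq_top_iff_one _).mpr (by simpa using hμ))
  rw [SetLike.mem_coe, RingHom.mem_ker, constantCoeff_monomial,
    if_neg (suppInd_eq_zero_iff.not.mpr hμ0)]

theorem MvPolynomial.comap_C_ker_constantCoeff (A : Type*) [CommRing A] (I : Type*) :
    (RingHom.ker (constantCoeff (R := A) (σ := I))).comap C = ⊥ := by
  rw [RingHom.comap_ker, constantCoeff_comp_C]
  exact (RingHom.injective_iff_ker_eq_bot _).mp fun _ _ h => h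

theorem nilpotent_nilradical_of_torsion_floor_eq_torsion_radical_general
    {A : Type u} [CommRing A] {I : Type v}
    (𝔞 : Ideal (MvPolynomial I A)) (hproper : 𝔞 ≠ ⊤)
    (heq : ∀ (M : Type (max u v)) [AddCommGroup M] [Module (MvPolynomial I A) M] (x : M),
      (∃ n : ℕ, (mvFloor 𝔞) ^ n ≤ Ideal.torsionOf (MvPolynomial I A) M x) ↔
        (∃ n : ℕ, 𝔞.radical ^ n ≤ Ideal.torsionOf (MvPolynomial I A) M x)) :
    ∃ n : ℕ, nilradical A ^ n = 0 := by
  obtain ⟨n, hn⟩ := Ideal.exists_pow_le_of_torsion_imp fun M _ _ x => (heq M x).mp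
  have hconst : (nilradical A ^ n).map C ≤ RingHom.ker (constantCoeff (R := A) (σ := I)) :=
    calc (nilradical A ^ n).map C = ((nilradical A).map C) ^ n := Ideal.map_pow _ _ _
      _ ≤ 𝔞.radical ^ n := Ideal.pow_right_mono (Ideal.map_nilradical_le_radical C 𝔞) n
      _ ≤ mvFloor 𝔞 := hn
      _ ≤ _ := mvFloor_le_ker_constantCoeff hproper
  rw [Ideal.map_le_iff_le_comap, comap_C_ker_constantCoeff] at hconst
  exact ⟨n, le_bot_iff.mp hconst⟩

/-- implication (iii) ⇒ (i) of the unnumbered Proposition of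
Section 2: if there exists a proper monomial ideal `𝔞` of `R = A[(X_i)_{i ∈ I}]`
with `Γ_⌊𝔞⌋ = Γ_√𝔞`, then the nilradical of `A` is nilpotent. -/
theorem nilpotent_nilradical_of_torsion_floor_eq_torsion_radical
    {A : Type u} [CommRing A] {I : Type v}
    (𝔞 : Ideal (MvPolynomial I A)) (h : IsMonomialIdeal 𝔞) (hproper : 𝔞 ≠ ⊤)
    (heq : ∀ (M : Type (max u v)) [AddCommGroup M] [Module (MvPolynomial I A) M] (x : M),
      (∃ n : ℕ, (mvFloor 𝔞) ^ n ≤ Ideal.torsionOf (MvPolynomial I A) M x) ↔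
        (∃ n : ℕ, 𝔞.radical ^ n ≤ Ideal.torsionOf (MvPolynomial I A) M x)) :
    ∃ n : ℕ, nilradical A ^ n = 0 :=
  nilpotent_nilradical_of_torsion_floor_eq_torsion_radical_general 𝔞 hproper heq
end
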